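/- For the list type L_A = ∀α. !(A ⊸ α ⊸ α) ⊸ §(α ⊸ α) in λ_LAL and any type B, there is a closed λ_LAL term fold_B of type !(A ⊸ B ⊸ B) ⊸ §B ⊸ L_A ⊸ §B implementing list fold: applied to !s, §b and the Church encoding of a list (a_1, …, a_n), it reduces to §((s)a_1((s)a_2(…((s)a_n b)…))). -/

import Mathlib

set_option maxHeartbeats 1000000

/-! ## Terms of the light affine lambda-calculus λ_LAL (de Bruijn indices) -/

inductive Tm : Type where
  | var : ℕ → Tm
  | lam : Tm → Tm
  | app : Tm → Tm → Tm
  | bang : Tm → Tm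
  /-- `letBang u t` is `let u be !x in t`; `t` binds de Bruijn index 0. -/
  | letBang : Tm → Tm → Tm
  | para : Tm → Tm
  /-- `letPara u t` is `let u be §x in t`; `t` binds de Bruijn index 0. -/
  | letPara : Tm → Tm → Tm

namespace LAL

def upRen (f : ℕ → ℕ) : ℕ → ℕ
  | 0 => 0
  | n + 1 => f n + 1

def rename (f : ℕ → ℕ) : Tm → Tm
  | .var n => .var (f n)
  | .lam t => .lam (rename (upRen f) t)
  | .app t u => .app (rename f t) (rename f u)
  | .bang t => .bang (rename f t)
  | .letBang u t => .letBang (rename f u) (rename (upRen f) t)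
  | .para t => .para (rename f t)
  | .letPara u t => .letPara (rename f u) (rename (upRen f) t)

/-- Capture-avoiding substitution `t[u / var k]` (indices above `k` are shifted
down). -/
def sub : Tm → ℕ → Tm → Tm
  | .var n, k, u => if n = k then rename (· + k) u else if k < n then .var (n - 1) else .var n
  | .lam t, k, u => .lam (sub t (k + 1) u)
  | .app t v, k, u => .app (sub t k u) (sub v k u)
  | .bang t, k, u => .bang (sub t k u)
  | .letBang v t, k, u => .letBang (sub v k u) (sub t (k + 1) u)
  | .para t, k, u => .para (sub t k u)
  | .letPara v t, k, u => .letPara (sub v k u) (sub t (k + 1) u)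

/-! ## Reduction -/

inductive Rule : Type where
  | beta | bang | para | com1 | com2

/-- One-step reduction of λ_LAL: contextual closure of the rules
(β), (!), (§), (com1), (com2). -/
inductive Step : Rule → Tm → Tm → Prop where
  | beta {t u} : Step .beta (.app (.lam t) u) (sub t 0 u)
  | bang {t u} : Step .bang (.letBang (.bang u) t) (sub t 0 u)
  | para {t u} : Step .para (.letPara (.para u) t) (sub t 0 u)
  | com1BB {u₁ t₁ t₂} : Step .com1 (.letBang (.letBang u₁ t₁) t₂)
      (.letBang u₁ (.letBang t₁ (rename (upRen (· + 1)) t₂)))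
  | com1BP {u₁ t₁ t₂} : Step .com1 (.letPara (.letBang u₁ t₁) t₂)
      (.letBang u₁ (.letPara t₁ (rename (upRen (· + 1)) t₂)))
  | com1PB {u₁ t₁ t₂} : Step .com1 (.letBang (.letPara u₁ t₁) t₂)
      (.letPara u₁ (.letBang t₁ (rename (upRen (· + 1)) t₂)))
  | com1PP {u₁ t₁ t₂} : Step .com1 (.letPara (.letPara u₁ t₁) t₂)
      (.letPara u₁ (.letPara t₁ (rename (upRen (· + 1)) t₂)))
  | com2B {u₁ t₁ t₂} : Step .com2 (.app (.letBang u₁ t₁) t₂)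
      (.letBang u₁ (.app t₁ (rename (· + 1) t₂)))
  | com2P {u₁ t₁ t₂} : Step .com2 (.app (.letPara u₁ t₁) t₂)
      (.letPara u₁ (.app t₁ (rename (· + 1) t₂)))
  | congLam {r t t'} : Step r t t' → Step r (.lam t) (.lam t')
  | congApp₁ {r t t' u} : Step r t t' → Step r (.app t u) (.app t' u)
  | congApp₂ {r t u u'} : Step r u u' → Step r (.app t u) (.app t u')
  | congBang {r t t'} : Step r t t' → Step r (.bang t) (.bang t')
  | congPara {r t t'} : Step r t t' → Step r (.para t) (.para t')
  | congLetBang₁ {r u u' t} : Step r u u' → Step r (.letBang u t) (.letBang u' t)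
  | congLetBang₂ {r u t t'} : Step r t t' → Step r (.letBang u t) (.letBang u t')
  | congLetPara₁ {r u u' t} : Step r u u' → Step r (.letPara u t) (.letPara u' t)
  | congLetPara₂ {r u t t'} : Step r t t' → Step r (.letPara u t) (.letPara u t')

/-- Many-step reduction. -/
def Red : Tm → Tm → Prop := Relation.ReflTransGen (fun a b => ∃ r, Step r a b)

/-! ## Types of intuitionistic Light Affine Logic -/

inductive Ty : Type where
  | tvar : ℕ → Ty
  | lolli : Ty → Ty → Ty
  | bang : Ty → Ty
  | para : Ty → Ty
  | all : Ty → Ty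

def liftTy (c : ℕ) : Ty → Ty
  | .tvar n => if n < c then .tvar n else .tvar (n + 1)
  | .lolli A B => .lolli (liftTy c A) (liftTy c B)
  | .bang A => .bang (liftTy c A)
  | .para A => .para (liftTy c A)
  | .all A => .all (liftTy (c + 1) A)

def substTy : Ty → ℕ → Ty → Ty
  | .tvar n, k, B => if n = k then (liftTy 0)^[k] B else if k < n then .tvar (n - 1) else .tvar n
  | .lolli A C, k, B => .lolli (substTy A k B) (substTy C k B)
  | .bang A, k, B => .bang (substTy A k B)
  | .para A, k, B => .para (substTy A k B)
  | .all A, k, B => .all (substTy A (k + 1) B)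

/-! ## Syntactic sugar: tensor -/

/-- `A ⊗ B = ∀α.((A ⊸ B ⊸ α) ⊸ α)`. -/
def tensorTy (A B : Ty) : Ty :=
  .all (.lolli (.lolli (liftTy 0 A) (.lolli (liftTy 0 B) (.tvar 0))) (.tvar 0))

/-- `t ⊗ u = λy.((y)t)u`. -/
def tensorTm (t u : Tm) : Tm :=
  .lam (.app (.app (.var 0) (rename (· + 1) t)) (rename (· + 1) u))

/-- `let u be x⊗y in t = (u)λx.λy.t`; in `t`, index 1 is the first component
and index 0 the second. -/
def letTen (u t : Tm) : Tm := .app u (.lam (.lam t))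

/-! ## Typing (natural-deduction presentation of LAL, with discharged marks) -/

inductive Mark : Type where
  | pl  -- plain
  | db  -- !-discharged
  | dp  -- §-discharged
  deriving DecidableEq

/-- Transposition of de Bruijn indices `i` and `i+1`. -/
def swapF (i : ℕ) : ℕ → ℕ := fun n => if n = i then i + 1 else if n = i + 1 then i else n

inductive Tj : List (Mark × Ty) → Tm → Ty → Prop where
  | ax (A : Ty) : Tj [(.pl, A)] (.var 0) A
  | weak {Γ t A} (e : Mark × Ty) : Tj Γ t A → Tj (e :: Γ) (rename (· + 1) t) A
  | exch {Γ Δ : List (Mark × Ty)} {a b t A} :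
      Tj (Γ ++ a :: b :: Δ) t A → Tj (Γ ++ b :: a :: Δ) (rename (swapF Γ.length) t) A
  | cntr {Γ t A B} : Tj ((.db, B) :: (.db, B) :: Γ) t A →
      Tj ((.db, B) :: Γ) (rename Nat.pred t) A
  | cut {Γ Δ : List (Mark × Ty)} {u t A C} : Tj Δ u A → Tj ((.pl, A) :: Γ) t C →
      Tj (Γ ++ Δ) (sub t 0 (rename (· + Γ.length) u)) C
  | lam {Γ t A B} : Tj ((.pl, A) :: Γ) t B → Tj Γ (.lam t) (.lolli A B)
  | app {Γ Δ : List (Mark × Ty)} {t u A B} : Tj Γ t (.lolli A B) → Tj Δ u A →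
      Tj (Γ ++ Δ) (.app t (rename (· + Γ.length) u)) B
  | allI {Γ : List (Mark × Ty)} {t A} :
      Tj (Γ.map (fun e => (e.1, liftTy 0 e.2))) t A → Tj Γ t (.all A)
  | allE {Γ t A} (B : Ty) : Tj Γ t (.all A) → Tj Γ t (substTy A 0 B)
  | bangI₀ {t A} : Tj [] t A → Tj [] (.bang t) (.bang A)
  | bangI₁ {t A B} : Tj [(.pl, B)] t A → Tj [(.db, B)] (.bang t) (.bang A)
  | bangE {Γ Δ : List (Mark × Ty)} {u t A C} : Tj Δ u (.bang A) →
      Tj ((.db, A) :: Γ) t C →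
      Tj (Γ ++ Δ) (.letBang (rename (· + Γ.length) u) t) C
  | paraI {Γ Γ' : List (Mark × Ty)} {t A} : Tj Γ t A →
      (∀ e ∈ Γ, e.1 = Mark.pl) →
      List.Forall₂ (fun (e e' : Mark × Ty) => e'.2 = e.2 ∧ e'.1 ≠ Mark.pl) Γ Γ' →
      Tj Γ' (.para t) (.para A)
  | paraE {Γ Δ : List (Mark × Ty)} {u t A C} : Tj Δ u (.para A) →
      Tj ((.dp, A) :: Γ) t C →
      Tj (Γ ++ Δ) (.letPara (rename (· + Γ.length) u) t) C

/-! ## Church encodings -/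

/-- Tally integers : `N = ∀α. !(α ⊸ α) ⊸ §(α ⊸ α)`. -/
def natTy : Ty := .all (.lolli (.bang (.lolli (.tvar 0) (.tvar 0)))
  (.para (.lolli (.tvar 0) (.tvar 0))))

/-- Church numeral `n̲` of type `N`. -/
def churchNat (n : ℕ) : Tm :=
  .lam (.letBang (.var 0) (.para (.lam ((fun b => Tm.app (.var 1) b)^[n] (.var 0)))))

/-- Lists of elements of type `A` : `L_A = ∀α. !(A ⊸ α ⊸ α) ⊸ §(α ⊸ α)`. -/
def listTy (A : Ty) : Ty := .all (.lolli (.bang (.lolli (liftTy 0 A)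
  (.lolli (.tvar 0) (.tvar 0)))) (.para (.lolli (.tvar 0) (.tvar 0))))

/-- Church encoding of the list whose elements are the terms `as`. -/
def encListTm (as : List Tm) : Tm :=
  .lam (.letBang (.var 0) (.para (.lam
    (as.foldr (fun a acc => Tm.app (.app (.var 1) (rename (· + 3) a)) acc) (.var 0)))))

/-! ## Pure lambda-terms, β-reduction, and system F -/

inductive PTm : Type where
  | var : ℕ → PTm
  | lam : PTm → PTm
  | app : PTm → PTm → PTm

def prename (f : ℕ → ℕ) : PTm → PTm
  | .var n => .var (f n)
  | .lam t => .lam (prename (upRen f) t)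
  | .app t u => .app (prename f t) (prename f u)

def psub : PTm → ℕ → PTm → PTm
  | .var n, k, u => if n = k then prename (· + k) u else if k < n then .var (n - 1) else .var n
  | .lam t, k, u => .lam (psub t (k + 1) u)
  | .app t v, k, u => .app (psub t k u) (psub v k u)

/-- β-reduction of the pure lambda-calculus (one step, contextual). -/
inductive PStep : PTm → PTm → Prop where
  | beta {t u} : PStep (.app (.lam t) u) (psub t 0 u)
  | congLam {t t'} : PStep t t' → PStep (.lam t) (.lam t')
  | congApp₁ {t t' u} : PStep t t' → PStep (.app t u) (.app t' u)
  | congApp₂ {t u u'} : PStep u u' → PStep (.app t u) (.app t u')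

/-- Zero or more β-reduction steps. -/
def PRed : PTm → PTm → Prop := Relation.ReflTransGen PStep

/-- Erasure of λ_LAL terms to pure lambda-terms. -/
def eraseTm : Tm → PTm
  | .var n => .var n
  | .lam t => .lam (eraseTm t)
  | .app t u => .app (eraseTm t) (eraseTm u)
  | .bang t => eraseTm t
  | .para t => eraseTm t
  | .letBang u t => psub (eraseTm t) 0 (eraseTm u)
  | .letPara u t => psub (eraseTm t) 0 (eraseTm u)

/-- Types of system F. -/
inductive FTy : Type where
  | tvar : ℕ → FTy
  | arr : FTy → FTy → FTy
  | all : FTy → FTy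

def liftF (c : ℕ) : FTy → FTy
  | .tvar n => if n < c then .tvar n else .tvar (n + 1)
  | .arr A B => .arr (liftF c A) (liftF c B)
  | .all A => .all (liftF (c + 1) A)

def substF : FTy → ℕ → FTy → FTy
  | .tvar n, k, B => if n = k then (liftF 0)^[k] B else if k < n then .tvar (n - 1) else .tvar n
  | .arr A C, k, B => .arr (substF A k B) (substF C k B)
  | .all A, k, B => .all (substF A (k + 1) B)

/-- Erasure of LAL formulas to system F types. -/
def eraseTy : Ty → FTy
  | .tvar n => .tvar n
  | .lolli A B => .arr (eraseTy A) (eraseTy B)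
  | .bang A => eraseTy A
  | .para A => eraseTy A
  | .all A => .all (eraseTy A)

/-- System F typing. -/
inductive FTj : List FTy → PTm → FTy → Prop where
  | var {Γ n A} : Γ[n]? = some A → FTj Γ (.var n) A
  | lam {Γ t A B} : FTj (A :: Γ) t B → FTj Γ (.lam t) (.arr A B)
  | app {Γ t u A B} : FTj Γ t (.arr A B) → FTj Γ u A → FTj Γ (.app t u) B
  | allI {Γ t A} : FTj (Γ.map (liftF 0)) t A → FTj Γ t (.all A)
  | allE {Γ t A} (B : FTy) : FTj Γ t (.all A) → FTj Γ t (substF A 0 B)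

end LAL

/-!
Instantiating the list type at `α := B`, the Church list applied to `!s` reduces to
`§(λx. s a₁ (… (s aₙ x)))`. The fold term opens this box and the box `§b` by two
`§`-eliminations, so both contents sit at depth one and `§((g)y)` is a legal promotion;
firing the remaining redexes yields `§(s a₁ (… (s aₙ b)))`.
-/

namespace LAL

lemma upRen_comp (f g : ℕ → ℕ) : upRen (f ∘ g) = upRen f ∘ upRen g := by
  funext n; cases n <;> rfl

lemma rename_rename (f g : ℕ → ℕ) (t : Tm) : rename f (rename g t) = rename (f ∘ g) t := by
  induction t generalizing f g <;> simp [rename, upRen_comp, *]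

lemma rename_upRen_add_rename_succ (j : ℕ) (t : Tm) :
    rename (upRen (· + j)) (rename (· + 1) t) = rename (· + (j + 1)) t := by
  rw [rename_rename]; rfl

@[simp] lemma upRen_id : upRen (fun n => n) = fun n => n := by
  funext n; cases n <;> rfl

@[simp] lemma rename_id (t : Tm) : rename (fun n => n) t = t := by
  induction t <;> simp [rename, *]

lemma upRen_ne_succ {f : ℕ → ℕ} {k : ℕ} (hf : ∀ n, f n ≠ k) (n : ℕ) : upRen f n ≠ k + 1 := by
  cases n with
  | zero => simp [upRen]
  | succ m => simpa [upRen] using hf m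

lemma upRen_predAbove (f : ℕ → ℕ) (k : ℕ) :
    (fun n => if k + 1 < upRen f n then upRen f n - 1 else upRen f n)
      = upRen (fun n => if k < f n then f n - 1 else f n) := by
  funext n
  cases n with
  | zero => simp [upRen]
  | succ m =>
    by_cases h : k < f m
    · simp [upRen, h]; omega
    · simp [upRen, h]

lemma sub_rename {f : ℕ → ℕ} {k : ℕ} (hf : ∀ n, f n ≠ k) (t u : Tm) :
    sub (rename f t) k u = rename (fun n => if k < f n then f n - 1 else f n) t := by
  induction t generalizing f k with
  | var n => simp only [rename, sub, hf n, if_false]; split <;> rfl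
  | _ =>
    simp only [rename, sub, upRen_predAbove, *, upRen_ne_succ hf, ne_eq, not_false_eq_true,
      implies_true]

lemma sub_rename_add {k j : ℕ} (h : k ≤ j) (t u : Tm) :
    sub (rename (· + (j + 1)) t) k u = rename (· + j) t := by
  rw [sub_rename (by omega)]
  congr 1; funext n; rw [if_pos (by omega)]; omega

/-- `s a₁ (s a₂ (… (s aₙ z)))`, with each `aᵢ` shifted by `j` as it stands under `j` binders. -/
def foldrApp (s : Tm) (j : ℕ) (as : List Tm) (z : Tm) : Tm :=
  as.foldr (fun a acc => .app (.app s (rename (· + j) a)) acc) z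

lemma encListTm_eq_foldrApp (as : List Tm) :
    encListTm as = .lam (.letBang (.var 0) (.para (.lam (foldrApp (.var 1) 3 as (.var 0))))) :=
  rfl

lemma foldrApp_zero (s z : Tm) (as : List Tm) :
    foldrApp s 0 as z = as.foldr (fun a acc => .app (.app s a) acc) z := by
  simp [foldrApp]

lemma sub_foldrApp {k j : ℕ} (h : k ≤ j) (s z u : Tm) (as : List Tm) :
    sub (foldrApp s (j + 1) as z) k u = foldrApp (sub s k u) j as (sub z k u) := by
  induction as with
  | nil => rfl
  | cons a as ih => simp only [foldrApp, List.foldr, sub] at *; rw [ih, sub_rename_add h]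

lemma rename_foldrApp {f : ℕ → ℕ} {j j' : ℕ} (hf : f ∘ (· + j) = (· + j')) (s z : Tm)
    (as : List Tm) :
    rename f (foldrApp s j as z) = foldrApp (rename f s) j' as (rename f z) := by
  induction as with
  | nil => rfl
  | cons a as ih => simp only [foldrApp, List.foldr, rename] at *; rw [ih, rename_rename, hf]

instance : Trans Red Red Red := ⟨Relation.ReflTransGen.trans⟩

lemma Step.red {r : Rule} {a b c : Tm} (h : Step r a b) (hc : b = c) : Red a c :=
  hc ▸ .single ⟨r, h⟩

lemma Red.congr {F : Tm → Tm} (hF : ∀ {r a b}, Step r a b → Step r (F a) (F b)) {a b : Tm}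
    (h : Red a b) : Red (F a) (F b) :=
  h.lift F fun _ _ ⟨r, hr⟩ => ⟨r, hF hr⟩

lemma encListTm_app_bang (s : Tm) (as : List Tm) :
    Red (.app (encListTm as) (.bang s))
      (.para (.lam (foldrApp (rename (· + 1) s) 1 as (.var 0)))) := by
  rw [encListTm_eq_foldrApp]
  calc Red _ (.letBang (.bang s) (.para (.lam (foldrApp (.var 1) 2 as (.var 0))))) :=
      Step.beta.red (by simp [sub, rename, sub_foldrApp])
    Red _ _ := Step.bang.red (by simp [sub, sub_foldrApp])

/-- `λf.λz.λl. let (l)f be §g in let z be §y in §((g)y)`. -/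
def foldTm : Tm :=
  .lam (.lam (.lam (.letPara (.app (.var 0) (.var 2))
    (.letPara (.var 2) (.para (.app (.var 1) (.var 0)))))))

lemma foldTm_red (s b : Tm) (as : List Tm) :
    Red (.app (.app (.app foldTm (.bang s)) (.para b)) (encListTm as))
      (.para (foldrApp s 0 as b)) :=
  calc Red _ (.letPara (.app (encListTm as) (.bang s))
        (.letPara (.para (rename (· + 1) b)) (.para (.app (.var 1) (.var 0))))) :=
      .head ⟨_, .congApp₁ (.congApp₁ .beta)⟩ <| .head ⟨_, .congApp₁ .beta⟩ <|
        Step.beta.red (by simp [sub, rename, sub_rename_add])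
    Red _ (.letPara (.para (.lam (foldrApp (rename (· + 1) s) 1 as (.var 0))))
        (.letPara (.para (rename (· + 1) b)) (.para (.app (.var 1) (.var 0))))) :=
      Red.congr .congLetPara₁ (encListTm_app_bang s as)
    Red _ _ :=
      .head ⟨_, .para⟩ <| .head ⟨_, .para⟩ <| Step.red (.congPara .beta) <| by
        simp [sub, sub_rename_add, sub_foldrApp, rename_upRen_add_rename_succ, rename, upRen,
          rename_foldrApp (f := upRen (· + 1)) (j := 1) (j' := 2) (funext fun _ => rfl)]

lemma substTy_liftTy (A B : Ty) (c : ℕ) : substTy (liftTy c A) c B = A := by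
  induction A generalizing c with
  | tvar n =>
    by_cases h : n < c
    · simp [liftTy, substTy, h, h.ne]
      omega
    · simp [liftTy, substTy, h, show n + 1 ≠ c by omega, show c ≤ n by omega]
  | _ => simp [liftTy, substTy, *]

lemma listTy_elim (A B : Ty) :
    Tj [(.pl, listTy A)] (.var 0)
      (.lolli (.bang (.lolli A (.lolli B B))) (.para (.lolli B B))) := by
  simpa [substTy, substTy_liftTy] using Tj.allE B (.ax (listTy A))

lemma foldTm_typing (A B : Ty) :
    Tj [] foldTm (.lolli (.bang (.lolli A (.lolli B B)))
      (.lolli (.para B) (.lolli (listTy A) (.para B)))) := by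
  refine .lam (.lam (.lam ?_))
  have hIter : Tj ([(.pl, listTy A)] ++ [(.pl, .bang (.lolli A (.lolli B B)))])
      (.app (.var 0) (.var 1)) (.para (.lolli B B)) :=
    .app (listTy_elim A B) (.ax _)
  have hApp : Tj [(.dp, B), (.dp, .lolli B B)] (.para (.app (.var 1) (.var 0))) (.para B) := by
    refine .paraI (.exch (Γ := []) (.app (Γ := [(.pl, .lolli B B)]) (.ax _) (.ax B))) ?_ ?_ <;>
      simp
  have hBody := Tj.paraE (Γ := [(.dp, .lolli B B)]) (.ax (.para B)) hApp
  exact .exch (Γ := []) (.paraE (Γ := [(.pl, .para B)]) hIter hBody)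

end LAL

open LAL in
/-- For any types `A`, `B` there is a closed term
`fold_B : !(A ⊸ B ⊸ B) ⊸ §B ⊸ L_A ⊸ §B` implementing list fold: applied to
`!s`, `§b` and the Church encoding of a list `(a₁, …, a_n)` it reduces to
`§((s)a₁((s)a₂(…((s)a_n b)…)))`. -/
theorem fold_exists (A B : Ty) :
    ∃ fold : Tm,
      Tj [] fold (Ty.lolli (Ty.bang (Ty.lolli A (Ty.lolli B B)))
        (Ty.lolli (Ty.para B) (Ty.lolli (listTy A) (Ty.para B)))) ∧
      ∀ (s b : Tm) (as : List Tm),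
        Red (Tm.app (Tm.app (Tm.app fold (Tm.bang s)) (Tm.para b)) (encListTm as))
          (Tm.para (as.foldr (fun a acc => Tm.app (Tm.app s a) acc) b)) :=
  ⟨foldTm, foldTm_typing A B, fun s b as => foldrApp_zero s b as ▸ foldTm_red s b as⟩
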